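/- Fix n ∈ ℕ with n ≥ 1 and real parameters a, b, α, β with (a−b+1|q)_n (2a−β+1|q)_n (a−b−α+1|q)_n ≠ 0. Then for every real s: ũ_n^{α,β}(x(s+1),a,b)_q − ũ_n^{α,β}(x(s),a,b)_q = −[2s+2]_q [2b−2a+α+β−n−1]_q · ũ_{n−1}^{α,β}(x(s+1/2), a+1/2, b−1/2)_q. -/

import Mathlib

open Finset

/-- The symmetric q-number `[s]_q = (q^{s/2} - q^{-s/2})/(q^{1/2} - q^{-1/2})`. -/
noncomputable def qnum (q s : ℝ) : ℝ :=
  (q ^ (s / 2) - q ^ (-s / 2)) / (q ^ ((1 : ℝ) / 2) - q ^ (-(1 : ℝ) / 2))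

/-- The symmetric q-factorial `[n]_q! = ∏_{m=1}^n [m]_q`. -/
noncomputable def qfact (q : ℝ) (n : ℕ) : ℝ :=
  ∏ m ∈ Finset.range n, qnum q ((m : ℝ) + 1)

/-- The symmetric q-Pochhammer symbol `(a|q)_k = ∏_{m=0}^{k-1} [a+m]_q`. -/
noncomputable def qpoch (q a : ℝ) (k : ℕ) : ℝ :=
  ∏ m ∈ Finset.range k, qnum q (a + (m : ℝ))

/-- The q-Racah polynomial `u_n^{α,β}(x(s),a,b)_q` on the lattice `x(s)=[s]_q[s+1]_q`. -/
noncomputable def racahU (q a b α β : ℝ) (n : ℕ) (s : ℝ) : ℝ :=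
  qpoch q (a - b + 1) n * qpoch q (β + 1) n * qpoch q (a + b + α + 1) n / qfact q n *
    ∑ k ∈ Finset.range (n + 1),
      qpoch q (-(n : ℝ)) k * qpoch q (α + β + (n : ℝ) + 1) k * qpoch q (a - s) k *
          qpoch q (a + s + 1) k /
        (qpoch q 1 k * qpoch q (a - b + 1) k * qpoch q (β + 1) k *
          qpoch q (a + b + α + 1) k)

/-- The alternative q-Racah polynomial `ũ_n^{α,β}(x(s),a,b)_q`. -/
noncomputable def racahUt (q a b α β : ℝ) (n : ℕ) (s : ℝ) : ℝ :=
  qpoch q (a - b + 1) n * qpoch q (2 * a - β + 1) n * qpoch q (a - b - α + 1) n / qfact q n *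
    ∑ k ∈ Finset.range (n + 1),
      qpoch q (-(n : ℝ)) k * qpoch q (2 * a - 2 * b - α - β + (n : ℝ) + 1) k *
          qpoch q (a - s) k * qpoch q (a + s + 1) k /
        (qpoch q 1 k * qpoch q (a - b + 1) k * qpoch q (2 * a - β + 1) k *
          qpoch q (a - b - α + 1) k)

/-- `σ(s) = [s-a]_q [s+b]_q [s+a-β]_q [b+α-s]_q`. -/
noncomputable def racahSigma (q a b α β s : ℝ) : ℝ :=
  qnum q (s - a) * qnum q (s + b) * qnum q (s + a - β) * qnum q (b + α - s)

/-- `σ(-s-1) = [s+a+1]_q [b-s-1]_q [s-a+β+1]_q [b+α+s+1]_q`. -/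
noncomputable def racahSigmaM (q a b α β s : ℝ) : ℝ :=
  qnum q (s + a + 1) * qnum q (b - s - 1) * qnum q (s - a + β + 1) * qnum q (b + α + s + 1)

/-- `σ̃(s) = [s-a]_q [s+b]_q [s-a+β]_q [b+α+s]_q`. -/
noncomputable def racahSigmaT (q a b α β s : ℝ) : ℝ :=
  qnum q (s - a) * qnum q (s + b) * qnum q (s - a + β) * qnum q (b + α + s)

/-- `σ̃(-s-1) = [s+a+1]_q [b-s-1]_q [s+a-β+1]_q [b+α-s-1]_q`. -/
noncomputable def racahSigmaTM (q a b α β s : ℝ) : ℝ :=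
  qnum q (s + a + 1) * qnum q (b - s - 1) * qnum q (s + a - β + 1) * qnum q (b + α - s - 1)

/-- `τ_n(s)` for the q-Racah polynomials. -/
noncomputable def racahTau (q a b α β : ℝ) (n : ℕ) (s : ℝ) : ℝ :=
  -qnum q (α + β + 2 * (n : ℝ) + 2) * qnum q (s + (n : ℝ) / 2) * qnum q (s + (n : ℝ) / 2 + 1) +
    qnum q (a + (n : ℝ) / 2 + 1) * qnum q (b - (n : ℝ) / 2 - 1) *
      qnum q (β + (n : ℝ) / 2 + 1 - a) * qnum q (b + α + (n : ℝ) / 2 + 1) -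
    qnum q (a + (n : ℝ) / 2) * qnum q (b - (n : ℝ) / 2) * qnum q (β + (n : ℝ) / 2 - a) *
      qnum q (b + α + (n : ℝ) / 2)

/-!
With `h = log q / 2` one has `[s]_q = sinh (s h) / sinh h`, and the addition theorem for `sinh`
gives `[x][y] - [x+z][y-z] = [z][x-y+z]`. Peeling one factor off each Pochhammer symbol, this
becomes the q-difference of the basis of the q-Racah sum:
`(u-1|q)_{k+1} (v+1|q)_{k+1} - (u|q)_{k+1} (v|q)_{k+1} = [k+1][u-v-1] (u|q)_k (v+1|q)_k`.
In `ũ_n(x(s+1)) - ũ_n(x(s))`, with `u = a - s` and `v = a + s + 1`, the `k = 0` terms cancel, and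
the `(k+1)`-st term is `-[D][u-v-1]`, with `D = 2a-2b-α-β+n+1`, times the `k`-th term of the same
sum with its lower parameters `A, B, C`, its upper parameter `D` and `v` raised by one and `n`
lowered by one; that sum is `ũ_{n-1}(x(s+1/2), a+1/2, b-1/2)`.
-/

open Real

lemma sinh_mul_sinh_sub_sinh_mul_sinh (x y z : ℝ) :
    sinh x * sinh y - sinh (x + z) * sinh (y - z) = sinh z * sinh (x - y + z) := by
  simp only [sinh_eq, exp_add, exp_sub, exp_neg]
  field_simp
  ring

lemma qnum_eq_sinh {q : ℝ} (hq : 0 < q) (s : ℝ) :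
    qnum q s = sinh (s * (log q / 2)) / sinh (log q / 2) := by
  simp only [qnum, rpow_def_of_pos hq, sinh_eq]
  field_simp

lemma qnum_neg {q : ℝ} (hq : 0 < q) (s : ℝ) : qnum q (-s) = -qnum q s := by
  rw [qnum_eq_sinh hq, qnum_eq_sinh hq, neg_mul, sinh_neg, neg_div]

lemma qnum_ne_zero {q : ℝ} (hq0 : 0 < q) (hq1 : q ≠ 1) {s : ℝ} (hs : s ≠ 0) :
    qnum q s ≠ 0 := by
  have hlog : log q / 2 ≠ 0 := div_ne_zero (log_ne_zero_of_pos_of_ne_one hq0 hq1) two_ne_zero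
  rw [qnum_eq_sinh hq0]
  exact div_ne_zero (sinh_ne_zero.mpr (mul_ne_zero hs hlog)) (sinh_ne_zero.mpr hlog)

lemma qnum_mul_sub_qnum_mul {q : ℝ} (hq : 0 < q) (x y z : ℝ) :
    qnum q x * qnum q y - qnum q (x + z) * qnum q (y - z) = qnum q z * qnum q (x - y + z) := by
  simp only [qnum_eq_sinh hq, div_mul_div_comm, ← sub_div, add_mul, sub_mul]
  rw [sinh_mul_sinh_sub_sinh_mul_sinh]

@[simp]
lemma qpoch_zero (q a : ℝ) : qpoch q a 0 = 1 := prod_range_zero _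

lemma qpoch_succ (q a : ℝ) (k : ℕ) : qpoch q a (k + 1) = qpoch q a k * qnum q (a + k) :=
  prod_range_succ _ _

lemma qpoch_succ' (q a : ℝ) (k : ℕ) : qpoch q a (k + 1) = qnum q a * qpoch q (a + 1) k := by
  rw [qpoch, prod_range_succ', qpoch, Nat.cast_zero, add_zero, mul_comm]
  congr 1
  refine prod_congr rfl fun i _ => ?_
  push_cast
  ring_nf

lemma qpoch_ne_zero_of_le {q a : ℝ} {j k : ℕ} (h : qpoch q a k ≠ 0) (hjk : j ≤ k) :
    qpoch q a j ≠ 0 := by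
  rw [qpoch, prod_ne_zero_iff] at h ⊢
  exact fun m hm => h m (mem_range.mpr ((mem_range.mp hm).trans_le hjk))

lemma qpoch_one_ne_zero {q : ℝ} (hq0 : 0 < q) (hq1 : q ≠ 1) (k : ℕ) : qpoch q 1 k ≠ 0 :=
  prod_ne_zero_iff.mpr fun _ _ => qnum_ne_zero hq0 hq1 (by positivity)

lemma qfact_succ (q : ℝ) (n : ℕ) : qfact q (n + 1) = qfact q n * qnum q (n + 1) :=
  prod_range_succ _ _

lemma qpoch_sub_one_mul_qpoch_add_one_sub {q : ℝ} (hq : 0 < q) (u v : ℝ) (k : ℕ) :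
    qpoch q (u - 1) (k + 1) * qpoch q (v + 1) (k + 1) - qpoch q u (k + 1) * qpoch q v (k + 1) =
      qnum q (k + 1) * qnum q (u - v - 1) * (qpoch q u k * qpoch q (v + 1) k) := by
  rw [qpoch_succ' q (u - 1), sub_add_cancel, qpoch_succ q (v + 1), qpoch_succ q u,
    qpoch_succ' q v]
  have key := qnum_mul_sub_qnum_mul hq (u - 1) (v + 1 + k) (k + 1)
  rw [show u - 1 + (k + 1) = u + k by ring, show v + 1 + k - (k + 1) = v by ring,
    show u - 1 - (v + 1 + k) + (k + 1) = u - v - 1 by ring] at key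
  linear_combination (qpoch q u k * qpoch q (v + 1) k) * key

noncomputable def qRacahTerm (q A B C D : ℝ) (n : ℕ) (u v : ℝ) (k : ℕ) : ℝ :=
  qpoch q (-(n : ℝ)) k * qpoch q D k * qpoch q u k * qpoch q v k /
    (qpoch q 1 k * qpoch q A k * qpoch q B k * qpoch q C k)

noncomputable def qRacahSum (q A B C D : ℝ) (n : ℕ) (u v : ℝ) : ℝ :=
  qpoch q A n * qpoch q B n * qpoch q C n / qfact q n *
    ∑ k ∈ range (n + 1), qRacahTerm q A B C D n u v k

lemma racahUt_eq_qRacahSum (q a b α β : ℝ) (n : ℕ) (s : ℝ) :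
    racahUt q a b α β n s =
      qRacahSum q (a - b + 1) (2 * a - β + 1) (a - b - α + 1) (2 * a - 2 * b - α - β + n + 1) n
        (a - s) (a + s + 1) :=
  rfl

lemma qRacahTerm_zero (q A B C D : ℝ) (n : ℕ) (u v : ℝ) :
    qRacahTerm q A B C D n u v 0 = 1 := by
  simp [qRacahTerm]

lemma qRacahTerm_succ_sub {q : ℝ} (hq0 : 0 < q) (hq1 : q ≠ 1) {A B C : ℝ} (D : ℝ) (m : ℕ)
    (u v : ℝ) {j : ℕ} (hA : qpoch q A (j + 1) ≠ 0) (hB : qpoch q B (j + 1) ≠ 0)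
    (hC : qpoch q C (j + 1) ≠ 0) :
    qnum q A * qnum q B * qnum q C / qnum q (m + 1) *
        (qRacahTerm q A B C D (m + 1) (u - 1) (v + 1) (j + 1) -
          qRacahTerm q A B C D (m + 1) u v (j + 1)) =
      -(qnum q D * qnum q (u - v - 1)) *
        qRacahTerm q (A + 1) (B + 1) (C + 1) (D + 1) m u (v + 1) j := by
  rw [qpoch_succ'] at hA hB hC
  obtain ⟨hA₀, hA₁⟩ := mul_ne_zero_iff.mp hA
  obtain ⟨hB₀, hB₁⟩ := mul_ne_zero_iff.mp hB
  obtain ⟨hC₀, hC₁⟩ := mul_ne_zero_iff.mp hC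
  have hj : qnum q (j + 1) ≠ 0 := qnum_ne_zero hq0 hq1 (by positivity)
  have hm : qnum q (m + 1) ≠ 0 := qnum_ne_zero hq0 hq1 (by positivity)
  have h1 := qpoch_one_ne_zero hq0 hq1 j
  simp only [qRacahTerm, div_sub_div_same]
  rw [mul_assoc _ (qpoch q (u - 1) _), mul_assoc _ (qpoch q u _), ← mul_sub,
    qpoch_sub_one_mul_qpoch_add_one_sub hq0, qpoch_succ' q (-_), qpoch_succ' q D,
    qpoch_succ q 1, add_comm (1 : ℝ) j, qpoch_succ' q A, qpoch_succ' q B, qpoch_succ' q C,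
    Nat.cast_succ, qnum_neg hq0, show -((m : ℝ) + 1) + 1 = -m by ring]
  field_simp

lemma qRacahSum_succ_sub {q : ℝ} (hq0 : 0 < q) (hq1 : q ≠ 1) {A B C : ℝ} (D : ℝ) (m : ℕ)
    (u v : ℝ) (hA : qpoch q A (m + 1) ≠ 0) (hB : qpoch q B (m + 1) ≠ 0)
    (hC : qpoch q C (m + 1) ≠ 0) :
    qRacahSum q A B C D (m + 1) (u - 1) (v + 1) - qRacahSum q A B C D (m + 1) u v =
      -(qnum q D * qnum q (u - v - 1)) *
        qRacahSum q (A + 1) (B + 1) (C + 1) (D + 1) m u (v + 1) := by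
  have hprefactor :
      qpoch q A (m + 1) * qpoch q B (m + 1) * qpoch q C (m + 1) / qfact q (m + 1) =
        qpoch q (A + 1) m * qpoch q (B + 1) m * qpoch q (C + 1) m / qfact q m *
          (qnum q A * qnum q B * qnum q C / qnum q (m + 1)) := by
    rw [qpoch_succ', qpoch_succ', qpoch_succ', qfact_succ]
    ring
  have hterm : ∀ j ∈ range (m + 1),
      qnum q A * qnum q B * qnum q C / qnum q (m + 1) *
          (qRacahTerm q A B C D (m + 1) (u - 1) (v + 1) (j + 1) -
            qRacahTerm q A B C D (m + 1) u v (j + 1)) =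
        -(qnum q D * qnum q (u - v - 1)) *
          qRacahTerm q (A + 1) (B + 1) (C + 1) (D + 1) m u (v + 1) j := fun j hj ↦
    have hjm : j + 1 ≤ m + 1 := Nat.succ_le_succ (Nat.lt_succ_iff.mp (mem_range.mp hj))
    qRacahTerm_succ_sub hq0 hq1 D m u v (qpoch_ne_zero_of_le hA hjm)
      (qpoch_ne_zero_of_le hB hjm) (qpoch_ne_zero_of_le hC hjm)
  rw [qRacahSum, qRacahSum, qRacahSum, ← mul_sub, ← sum_sub_distrib, sum_range_succ',
    qRacahTerm_zero, qRacahTerm_zero, sub_self, add_zero, hprefactor, mul_assoc, mul_sum,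
    sum_congr rfl hterm, ← mul_sum]
  ring

theorem stmt_15 (q : ℝ) (hq0 : 0 < q) (hq1 : q ≠ 1) (n : ℕ) (hn : 1 ≤ n) (a b α β : ℝ)
    (hnz : qpoch q (a - b + 1) n * qpoch q (2 * a - β + 1) n *
      qpoch q (a - b - α + 1) n ≠ 0) :
    ∀ s : ℝ,
      racahUt q a b α β n (s + 1) - racahUt q a b α β n s =
        -(qnum q (2 * s + 2) * qnum q (2 * b - 2 * a + α + β - (n : ℝ) - 1)) *
          racahUt q (a + 1 / 2) (b - 1 / 2) α β (n - 1) (s + 1 / 2) := by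
  intro s
  obtain ⟨m, rfl⟩ : ∃ m, n = m + 1 := ⟨n - 1, (Nat.sub_add_cancel hn).symm⟩
  obtain ⟨hAB, hC⟩ := mul_ne_zero_iff.mp hnz
  obtain ⟨hA, hB⟩ := mul_ne_zero_iff.mp hAB
  set N : ℝ := ((m + 1 : ℕ) : ℝ)
  have hdiff := qRacahSum_succ_sub hq0 hq1 (2 * a - 2 * b - α - β + N + 1) m
    (a - s) (a + s + 1) hA hB hC
  have hfactor : qnum q (2 * a - 2 * b - α - β + N + 1) * qnum q (a - s - (a + s + 1) - 1) =
      qnum q (2 * s + 2) * qnum q (2 * b - 2 * a + α + β - N - 1) := by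
    rw [show a - s - (a + s + 1) - 1 = -(2 * s + 2) by ring,
      show 2 * a - 2 * b - α - β + N + 1 = -(2 * b - 2 * a + α + β - N - 1) by ring,
      qnum_neg hq0, qnum_neg hq0, neg_mul_neg, mul_comm]
  rw [hfactor] at hdiff
  simp only [racahUt_eq_qRacahSum]
  convert hdiff using 3 <;> push_cast [N] <;> ring
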